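/- Each of the 6 edges of the closed polygonal chain with vertices (1−√2, 1−√2, 0), (√2, √2, 0), (1/2, 1/2, 2√3 − √(3/2)), (√2, 1−√2, 0), (1−√2, √2, 0), (1/2, 1/2, 2√3 − √(3/2)), returning to (1−√2, 1−√2, 0), has Euclidean length exactly 4 − √2. -/

import Mathlib

/-! The base vertices are `(1/2 ± (√2 - 1/2), 1/2 ± (√2 - 1/2), 0)`, so base edges have squared
length `2 (2√2 - 1)²` and apex edges `2 (√2 - 1/2)² + h²`, where `h` is the apex height;
both equal `(4 - √2)² = 18 - 8√2` because `h² = 27/2 - 6√2`. -/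

noncomputable def pt3 (a b c : ℝ) : EuclideanSpace ℝ (Fin 3) := WithLp.toLp 2 ![a, b, c]

/-- The vertices of the closed covering circuit `F'_{2,2,2}` (last vertex = first). -/
noncomputable def F'222 : Fin 7 → EuclideanSpace ℝ (Fin 3) :=
  ![pt3 (1 - Real.sqrt 2) (1 - Real.sqrt 2) 0,
    pt3 (Real.sqrt 2) (Real.sqrt 2) 0,
    pt3 (1 / 2) (1 / 2) (2 * Real.sqrt 3 - Real.sqrt (3 / 2)),
    pt3 (Real.sqrt 2) (1 - Real.sqrt 2) 0,
    pt3 (1 - Real.sqrt 2) (Real.sqrt 2) 0,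
    pt3 (1 / 2) (1 / 2) (2 * Real.sqrt 3 - Real.sqrt (3 / 2)),
    pt3 (1 - Real.sqrt 2) (1 - Real.sqrt 2) 0]

open Real

lemma dist_pt3 (a b c d e f : ℝ) :
    dist (pt3 a b c) (pt3 d e f) = √((a - d) ^ 2 + (b - e) ^ 2 + (c - f) ^ 2) := by
  simp only [EuclideanSpace.dist_eq, pt3, Fin.sum_univ_three, Real.dist_eq, sq_abs,
    Matrix.cons_val_zero, Matrix.cons_val_one, Matrix.cons_val_two, Matrix.head_cons,
    Matrix.tail_cons]

lemma dist_pt3_eq_of_sq_eq {a b c d e f r : ℝ} (hr : 0 ≤ r)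
    (h : (a - d) ^ 2 + (b - e) ^ 2 + (c - f) ^ 2 = r ^ 2) :
    dist (pt3 a b c) (pt3 d e f) = r := by
  rw [dist_pt3, h, sqrt_sq hr]

lemma sqrt_two_le_four : √2 ≤ 4 := by
  rw [sqrt_le_left (by norm_num)]
  norm_num

lemma sqrt_three_mul_sqrt_three_halves : √3 * √(3 / 2) = 3 / 2 * √2 := by
  rw [← sqrt_mul (by norm_num), show (3 : ℝ) * (3 / 2) = (3 / 2) ^ 2 * 2 by norm_num,
    sqrt_mul (by positivity), sqrt_sq (by norm_num)]

lemma apex_height_sq : (2 * √3 - √(3 / 2)) ^ 2 = 27 / 2 - 6 * √2 := by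
  have h3 := sq_sqrt (show (0 : ℝ) ≤ 3 by norm_num)
  have h32 := sq_sqrt (show (0 : ℝ) ≤ 3 / 2 by norm_num)
  linear_combination 4 * h3 + h32 - 4 * sqrt_three_mul_sqrt_three_halves

/-- Each of the 6 edges of the closed chain `F'_{2,2,2}` has Euclidean length
exactly `4 − √2`. -/
theorem stmt16 :
    ∀ i : Fin 6, dist (F'222 i.castSucc) (F'222 i.succ) = 4 - Real.sqrt 2 := by
  have h2 := sq_sqrt (zero_le_two : (0 : ℝ) ≤ 2)
  intro i
  fin_cases i <;> refine dist_pt3_eq_of_sq_eq (sub_nonneg.mpr sqrt_two_le_four) ?_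
  all_goals first
    | linear_combination 7 * h2
    | linear_combination h2 + apex_height_sq
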